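/- Let α be an action of a discrete group G on a locally compact Hausdorff space X with more than two points, such that for every compact K ≠ X and every non-empty open U ⊆ X there exists g ∈ G with α_g(K) ⊆ U. Then the induced action σ on A = C₀(X) (σ_g(f) = f ∘ α_g⁻¹) is 1-majorizing: for every non-zero a ∈ A₊, every non-invertible b ∈ A₊ and ε > 0 there exist d ∈ A and g ∈ G with ‖d* σ_g(a) d − b‖ < ε. -/

import Mathlib

/-!
Let `U = {‖a‖/2 < a}` and `K = {ε/2 ≤ b}`. Since `b` is not invertible, `K` is a compact proper
subset of `X`, so some `α_g` moves `K` into `U`, and on `K` the translate `σ_{g⁻¹}(a) = a ∘ α_g` is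
bounded below by `‖a‖/2`. Then `d = √((b - ε/2)₊ / max(σ_{g⁻¹}(a), ‖a‖/2))` is continuous, supported
in `K`, and `d* σ_{g⁻¹}(a) d = (b - ε/2)₊`, which is within `ε/2` of `b`.
-/

open scoped ComplexOrder

open Filter Topology ZeroAtInfty

theorem Homeomorph.symm_inv_apply_of_map_mul {G X : Type*} [Group G] [TopologicalSpace X]
    (α : G → X ≃ₜ X) (hα : ∀ g h x, α (g * h) x = α g (α h x)) (g : G) (x : X) :
    (α g⁻¹).symm x = α g x := by
  have hone : ∀ y, α 1 y = y := fun y => (α 1).injective (by rw [← hα, one_mul])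
  rw [Homeomorph.symm_apply_eq, ← hα, inv_mul_cancel, hone]

theorem Complex.norm_ofReal_mul_mul_ofReal_sub_le {z w : ℂ} (hz : 0 ≤ z) (hw : 0 ≤ w)
    {r δ c : ℝ} (hδ : 0 ≤ δ) (hc : 0 ≤ c) (hr : r ^ 2 = max (‖w‖ - δ) 0 / max ‖z‖ c)
    (hzw : δ < ‖w‖ → c < ‖z‖) :
    ‖(r : ℂ) * z * r - w‖ ≤ δ := by
  have hreal : (r : ℂ) * z * r - w = ((r ^ 2 * ‖z‖ - ‖w‖ : ℝ) : ℂ) := by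
    conv_lhs => rw [← Complex.norm_of_nonneg' hz, ← Complex.norm_of_nonneg' hw]
    push_cast
    ring
  rw [hreal, Complex.norm_real, Real.norm_eq_abs, abs_le, hr]
  rcases le_or_gt ‖w‖ δ with hwδ | hwδ
  · rw [max_eq_right (by linarith), zero_div, zero_mul]
    constructor <;> linarith [norm_nonneg w]
  · have hzc := hzw hwδ
    rw [max_eq_left (by linarith), max_eq_left hzc.le, div_mul_cancel₀ _ (by linarith)]
    constructor <;> linarith

namespace ZeroAtInftyContinuousMap

variable {X : Type*} [TopologicalSpace X]

theorem isCompact_setOf_le_norm {E : Type*} [SeminormedAddCommGroup E] (f : C₀(X, E)) {δ : ℝ}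
    (hδ : 0 < δ) : IsCompact {x | δ ≤ ‖f x‖} := by
  have hsmall : {x | ‖f x‖ < δ} ∈ cocompact X :=
    (tendsto_zero_iff_norm_tendsto_zero.mp f.zero_at_infty') (Iio_mem_nhds hδ)
  obtain ⟨t, ht, hts⟩ := mem_cocompact.mp hsmall
  refine ht.of_isClosed_subset (isClosed_le continuous_const (map_continuous f).norm) ?_
  intro x hx
  by_contra hxt
  exact (hts hxt).out.not_ge hx.out

theorem exists_lt_norm_apply {E : Type*} [SeminormedAddCommGroup E] (f : C₀(X, E)) {r : ℝ}
    (hr₀ : 0 ≤ r) (hr : r < ‖f‖) : ∃ x, r < ‖f x‖ := by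
  by_contra! h
  rw [← norm_toBCF_eq_norm] at hr
  exact hr.not_ge ((BoundedContinuousFunction.norm_le hr₀).mpr h)

theorem exists_mul_mul_eq_of_ne_zero {𝕜 : Type*} [NormedField 𝕜] [CompactSpace X]
    (b : C₀(X, 𝕜)) (hb : ∀ x, b x ≠ 0) : ∃ c : C₀(X, 𝕜), ∀ f, b * c * f = f :=
  ⟨ContinuousMap.liftZeroAtInfty ⟨fun x => (b x)⁻¹, (map_continuous b).inv₀ hb⟩,
    fun f => ext fun x => by simp [ContinuousMap.liftZeroAtInfty, mul_inv_cancel₀ (hb x)]⟩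

theorem exists_norm_star_mul_mul_sub_le (a b : C₀(X, ℂ)) (ha : ∀ x, 0 ≤ a x)
    (hb : ∀ x, 0 ≤ b x) {δ c : ℝ} (hδ : 0 < δ) (hc : 0 < c)
    (hab : ∀ x, δ < ‖b x‖ → c < ‖a x‖) : ∃ d : C₀(X, ℂ), ‖star d * a * d - b‖ ≤ δ := by
  set r : X → ℝ := fun x => √(max (‖b x‖ - δ) 0 / max ‖a x‖ c)
  have hr_cont : Continuous r :=
    ((((map_continuous b).norm.sub continuous_const).max continuous_const).div
      ((map_continuous a).norm.max continuous_const)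
      fun x => (hc.trans_le (le_max_right _ _)).ne').sqrt
  have hr_supp : HasCompactSupport fun x => (r x : ℂ) := by
    refine HasCompactSupport.intro' (b.isCompact_setOf_le_norm hδ)
      (isClosed_le continuous_const (map_continuous b).norm) fun x hx => ?_
    have hbx : ‖b x‖ - δ ≤ 0 := by linarith [not_le.mp (Set.mem_ofPred.not.mp hx)]
    simp [r, max_eq_right hbx]
  refine ⟨⟨⟨fun x => (r x : ℂ), by fun_prop⟩, hr_supp.is_zero_at_infty⟩, ?_⟩
  rw [← norm_toBCF_eq_norm]
  refine (BoundedContinuousFunction.norm_le hδ.le).mpr fun x => ?_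
  change ‖star (r x : ℂ) * a x * r x - b x‖ ≤ δ
  rw [Complex.star_def, Complex.conj_ofReal]
  exact Complex.norm_ofReal_mul_mul_ofReal_sub_le (ha x) (hb x) hδ.le hc.le
    (Real.sq_sqrt (by positivity)) (hab x)

end ZeroAtInftyContinuousMap

theorem stmt15_general {X G : Type*} [TopologicalSpace X] [Group G]
    (α : G → X ≃ₜ X) (hα : ∀ g h x, α (g * h) x = α g (α h x))
    (htop : ∀ K : Set X, IsCompact K → K ≠ Set.univ → ∀ U : Set X, IsOpen U → U.Nonempty →
      ∃ g : G, ⇑(α g) '' K ⊆ U) :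
    ∀ a : ZeroAtInftyContinuousMap X ℂ, (∀ x, 0 ≤ a x) → a ≠ 0 →
      ∀ b : ZeroAtInftyContinuousMap X ℂ, (∀ x, 0 ≤ b x) →
        ¬ (∃ c : ZeroAtInftyContinuousMap X ℂ, ∀ f, b * c * f = f) →
      ∀ ε : ℝ, 0 < ε →
        ∃ (d : ZeroAtInftyContinuousMap X ℂ) (g : G),
          ‖star d * a.comp (α g).symm.toCocompactMap * d - b‖ < ε := by
  intro a ha ha0 b hb hbni ε hε
  have ha_pos : 0 < ‖a‖ := norm_pos_iff.mpr ha0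
  set K := {x | ε / 2 ≤ ‖b x‖}
  have hK : IsCompact K := b.isCompact_setOf_le_norm (half_pos hε)
  have hK_ne : K ≠ Set.univ := by
    intro hK_univ
    have : CompactSpace X := isCompact_univ_iff.mp (hK_univ ▸ hK)
    refine hbni (b.exists_mul_mul_eq_of_ne_zero fun x hx => ?_)
    have hxK : x ∈ K := hK_univ ▸ Set.mem_univ x
    change ε / 2 ≤ ‖b x‖ at hxK
    rw [hx, norm_zero] at hxK
    linarith
  set U := {x | ‖a‖ / 2 < ‖a x‖}
  have hU : IsOpen U := isOpen_lt continuous_const (map_continuous a).norm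
  have hU_ne : U.Nonempty := a.exists_lt_norm_apply (by positivity) (half_lt_self ha_pos)
  obtain ⟨g, hg⟩ := htop K hK hK_ne U hU hU_ne
  obtain ⟨d, hd⟩ := ZeroAtInftyContinuousMap.exists_norm_star_mul_mul_sub_le
    (a.comp (α g⁻¹).symm.toCocompactMap) b (fun x => ha _) hb (half_pos hε) (half_pos ha_pos)
    fun x hx => by
      change ‖a‖ / 2 < ‖a ((α g⁻¹).symm x)‖
      rw [Homeomorph.symm_inv_apply_of_map_mul α hα]
      exact hg ⟨x, hx.le, rfl⟩
  exact ⟨d, g⁻¹, hd.trans_lt (half_lt_self hε)⟩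

/-- If every compact `K ≠ X` can be moved into every non-empty open `U` by the
action `α` of `G` on a locally compact Hausdorff space `X` with more than two points, then the
induced action on `C₀(X)` is `1`-majorizing. Non-invertibility of `b ∈ C₀(X)₊` is expressed by
the non-existence of a quasi-inverse. -/
theorem stmt15 {X G : Type*} [TopologicalSpace X] [LocallyCompactSpace X] [T2Space X] [Group G]
    (hX : ∃ x y z : X, x ≠ y ∧ x ≠ z ∧ y ≠ z)
    (α : G → X ≃ₜ X) (hα : ∀ g h x, α (g * h) x = α g (α h x))
    (htop : ∀ K : Set X, IsCompact K → K ≠ Set.univ → ∀ U : Set X, IsOpen U → U.Nonempty →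
      ∃ g : G, ⇑(α g) '' K ⊆ U) :
    ∀ a : ZeroAtInftyContinuousMap X ℂ, (∀ x, 0 ≤ a x) → a ≠ 0 →
      ∀ b : ZeroAtInftyContinuousMap X ℂ, (∀ x, 0 ≤ b x) →
        ¬ (∃ c : ZeroAtInftyContinuousMap X ℂ, ∀ f, b * c * f = f) →
      ∀ ε : ℝ, 0 < ε →
        ∃ (d : ZeroAtInftyContinuousMap X ℂ) (g : G),
          ‖star d * a.comp (α g).symm.toCocompactMap * d - b‖ < ε :=
  stmt15_general α hα htop
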